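/- Let C be the set of monotone functions f : ℕ → ℕ, fix N ∈ ℕ, and let Bounded_N = { f₀f₁⋯ ∈ C^ω : for all k, f_k(f_{k−1}(⋯(f₀(0))⋯)) ≤ N } (an objective). Let L be the C-graph with vertex set {0, 1, …, N}, ordered by the reverse of the usual order on integers (so N is the least element and 0 the greatest), with edges ℓ →f ℓ' if and only if f(ℓ) ≤ ℓ'. Then L is well-monotonic, L satisfies Bounded_N, and every C-graph satisfying Bounded_N (of arbitrary cardinality) admits a morphism into L. -/

import Mathlib

/-!
Common vocabulary: graphs as edge relations `E : V → C → V → Prop` (a `C`-graph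
additionally has no sinks), infinite paths and their colorations, valuations,
values of vertices, morphisms, universality, monotonic graphs, games,
strategies, positional strategies and positionality, neutral colors.
-/

universe u v w

section Prelim

variable {C : Type} {X : Type}

/-- A `C`-graph (as an edge relation) has no sinks. -/
def NoSinks {V : Type v} (E : V → C → V → Prop) : Prop :=
  ∀ a : V, ∃ (c : C) (b : V), E a c b

/-- `InfPath E a w` : there is an infinite path from `a` with coloration `w`. -/
def InfPath {V : Type v} (E : V → C → V → Prop) (a : V) (w : ℕ → C) : Prop :=
  ∃ ρ : ℕ → V, ρ 0 = a ∧ ∀ i, E (ρ i) (w i) (ρ (i + 1))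

/-- The value of a vertex in a graph: supremum of values of colorations of
infinite paths from it. -/
noncomputable def vval {V : Type v} [CompleteLinearOrder X]
    (val : (ℕ → C) → X) (E : V → C → V → Prop) (a : V) : X :=
  sSup (val '' {w | InfPath E a w})

/-- Morphisms of `C`-graphs. -/
def IsMorphism {V : Type v} {V' : Type w} (E : V → C → V → Prop)
    (E' : V' → C → V' → Prop) (φ : V → V') : Prop :=
  ∀ ⦃a : V⦄ ⦃c : C⦄ ⦃b : V⦄, E a c b → E' (φ a) c (φ b)

/-- `val`-preserving morphisms of `C`-graphs. -/
def ValPreserving {V : Type v} {V' : Type w} [CompleteLinearOrder X]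
    (val : (ℕ → C) → X) (E : V → C → V → Prop) (E' : V' → C → V' → Prop)
    (φ : V → V') : Prop :=
  IsMorphism E E' φ ∧ ∀ a : V, vval val E' (φ a) = vval val E a

/-- Left composition: `a ≥ b → (b →c d) → (a →c d)`. -/
def LeftComp {L : Type v} [LinearOrder L] (M : L → C → L → Prop) : Prop :=
  ∀ ⦃a b : L⦄ ⦃c : C⦄ ⦃d : L⦄, b ≤ a → M b c d → M a c d

/-- Right composition: `(a →c b) → b ≥ d → (a →c d)`. -/
def RightComp {L : Type v} [LinearOrder L] (M : L → C → L → Prop) : Prop :=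
  ∀ ⦃a : L⦄ ⦃c : C⦄ ⦃b d : L⦄, M a c b → d ≤ b → M a c d

/-- A monotonic graph over a linearly ordered vertex set. -/
def Monotonic {L : Type v} [LinearOrder L] (M : L → C → L → Prop) : Prop :=
  LeftComp M ∧ RightComp M

/-- Every vertex has a `c`-predecessor, for every color `c`. -/
def CompletePreds {L : Type v} (M : L → C → L → Prop) : Prop :=
  ∀ (c : C) (l : L), ∃ p : L, M p c l

/-- `CWM C L M` : `M` is a completely well-monotonic `C`-graph over `L`:
monotonic, without sinks, well-ordered, a complete lattice, and with all
`c`-predecessors. -/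
def CWM (C : Type) (L : Type v) [LinearOrder L] (M : L → C → L → Prop) : Prop :=
  Monotonic M ∧ NoSinks M ∧ WellFounded ((· < ·) : L → L → Prop) ∧
    (∀ A : Set L, ∃ a : L, IsLUB A a) ∧ CompletePreds M

/-- `(κ, val)`-universality: every `C`-graph with fewer than `κ` vertices has a
`val`-preserving morphism into `M`. -/
def Universal {L : Type v} [CompleteLinearOrder X] (val : (ℕ → C) → X)
    (κ : Cardinal.{u}) (M : L → C → L → Prop) : Prop :=
  ∀ (V : Type u) (E : V → C → V → Prop), NoSinks E → Cardinal.mk V < κ →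
    ∃ φ : V → L, ValPreserving val E M φ

/-! Histories: finite paths from `v₀`, stored as lists of steps `(c, x)`,
most recent step first. -/

/-- Last vertex of a history. -/
def lastV {V : Type v} (v₀ : V) : List (C × V) → V
  | [] => v₀
  | (_, x) :: _ => x

/-- Validity of a history with respect to the graph `E` and start vertex `v₀`. -/
def ValidPath {V : Type v} (E : V → C → V → Prop) (v₀ : V) : List (C × V) → Prop
  | [] => True
  | (c, x) :: rest => ValidPath E v₀ rest ∧ E (lastV v₀ rest) c x

/-- A strategy (for Eve) from `v₀` in the game `(E, VEve, val)` : a subgraph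
`(H, F)` of the unfolding of `E` from `v₀`, containing the empty history,
without sinks, and closed under all extensions at Adam vertices. -/
structure Strategy {V : Type v} (E : V → C → V → Prop) (VEve : Set V) (v₀ : V) where
  H : Set (List (C × V))
  F : List (C × V) → C → List (C × V) → Prop
  valid : ∀ π ∈ H, ValidPath E v₀ π
  nil_mem : [] ∈ H
  F_sub : ∀ ⦃π : List (C × V)⦄ ⦃c : C⦄ ⦃π' : List (C × V)⦄,
    F π c π' → π ∈ H ∧ π' ∈ H ∧ ∃ x : V, π' = (c, x) :: π
  no_sink : ∀ π ∈ H, ∃ (c : C) (π' : List (C × V)), F π c π'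
  adam_closed : ∀ π ∈ H, lastV v₀ π ∉ VEve →
    ∀ (c : C) (x : V), E (lastV v₀ π) c x → ((c, x) :: π) ∈ H ∧ F π c ((c, x) :: π)

/-- The value of a strategy: supremum of values of colorations of infinite
paths from the empty history in the strategy. -/
noncomputable def Strategy.value {V : Type v} [CompleteLinearOrder X]
    (val : (ℕ → C) → X) {E : V → C → V → Prop} {VEve : Set V} {v₀ : V}
    (S : Strategy E VEve v₀) : X :=
  sSup (val '' {w | ∃ ρ : ℕ → List (C × V), ρ 0 = [] ∧ ∀ i, S.F (ρ i) (w i) (ρ (i + 1))})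

/-- The value of a vertex in a game: infimum of values of strategies from it. -/
noncomputable def gameValue {V : Type v} [CompleteLinearOrder X] (val : (ℕ → C) → X)
    (E : V → C → V → Prop) (VEve : Set V) (v₀ : V) : X :=
  ⨅ S : Strategy E VEve v₀, S.value val

/-- A positional strategy: a subgraph of `E` over all vertices keeping all
outgoing edges of Adam vertices. -/
structure PosStrategy {V : Type v} (E : V → C → V → Prop) (VEve : Set V) where
  F : V → C → V → Prop
  sub : ∀ ⦃a : V⦄ ⦃c : C⦄ ⦃b : V⦄, F a c b → E a c b
  no_sink : NoSinks F
  adam_all : ∀ a : V, a ∉ VEve → ∀ (c : C) (b : V), E a c b → F a c b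

/-- The value of a positional strategy from a vertex. -/
noncomputable def PosStrategy.value {V : Type v} [CompleteLinearOrder X]
    (val : (ℕ → C) → X) {E : V → C → V → Prop} {VEve : Set V}
    (P : PosStrategy E VEve) (v₀ : V) : X :=
  vval val P.F v₀

/-- Optimality of a positional strategy. -/
def PosStrategy.Optimal {V : Type v} [CompleteLinearOrder X]
    (val : (ℕ → C) → X) {E : V → C → V → Prop} {VEve : Set V}
    (P : PosStrategy E VEve) : Prop :=
  ∀ v₀ : V, P.value val v₀ = gameValue val E VEve v₀

/-- A valuation is positional if every game with this valuation admits an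
optimal positional strategy. -/
def Positional [CompleteLinearOrder X] (val : (ℕ → C) → X) : Prop :=
  ∀ (V : Type u) (E : V → C → V → Prop), NoSinks E → ∀ VEve : Set V,
    ∃ P : PosStrategy E VEve, P.Optimal val

/-! Words and neutral colors. -/

/-- Concatenation of a finite word with an infinite word. -/
def wcat (u : List C) (w : ℕ → C) : ℕ → C := fun i =>
  if h : i < u.length then u.get ⟨i, h⟩ else w (i - u.length)

/-- `w'` is obtained from `w` by inserting finitely many `e`'s between
consecutive letters (and before the first letter):
`w' = e^{n₀} w₀ e^{n₁} w₁ ⋯`. -/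
def IsEpsInsertion (e : C) (w w' : ℕ → C) : Prop :=
  ∃ σ : ℕ → ℕ, StrictMono σ ∧ (∀ k, w' (σ k) = w k) ∧ ∀ i, i ∉ Set.range σ → w' i = e

/-- `e` is a neutral color for `val`. -/
def Neutral [CompleteLinearOrder X] (val : (ℕ → C) → X) (e : C) : Prop :=
  ∀ w w' : ℕ → C, IsEpsInsertion e w w' → val w' = val w

/-- `e` is eventually good for Eve. -/
def EvGoodForEve [CompleteLinearOrder X] (val : (ℕ → C) → X) (e : C) : Prop :=
  ∀ u : List C, val (wcat u fun _ => e) = ⨅ z : ℕ → C, val (wcat u z)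

/-- `e` is strongly neutral for `val`. -/
def StronglyNeutral [CompleteLinearOrder X] (val : (ℕ → C) → X) (e : C) : Prop :=
  Neutral val e ∧ EvGoodForEve val e

/-- Prefix-increasing valuations. -/
def PrefixIncreasing [CompleteLinearOrder X] (val : (ℕ → C) → X) : Prop :=
  ∀ (u : List C) (w : ℕ → C), val w ≤ val (wcat u w)

/-! Objectives. -/

/-- The valuation (into the two-element complete linear order `Prop`,
`⊥ = False`, `⊤ = True`) associated with an objective `W`: winning words have
value `⊥`. -/
def toVal (W : Set (ℕ → C)) : (ℕ → C) → Prop := fun w => w ∉ W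

/-- A vertex satisfies the objective `W` if every coloration of an infinite
path from it belongs to `W`. -/
def Sat {V : Type v} (W : Set (ℕ → C)) (E : V → C → V → Prop) (a : V) : Prop :=
  ∀ w : ℕ → C, InfPath E a w → w ∈ W

/-- Prefix-invariant objectives. -/
def PrefixInvariant (W : Set (ℕ → C)) : Prop :=
  ∀ (u : List C) (w : ℕ → C), wcat u w ∈ W ↔ w ∈ W

/-- The completion `L^⊤` of a monotonic graph: a new top vertex with all
outgoing edges is added. -/
def completionE {L : Type v} (M : L → C → L → Prop) :
    WithTop L → C → WithTop L → Prop := fun x c y =>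
  x = ⊤ ∨ ∃ a b : L, x = (a : WithTop L) ∧ y = (b : WithTop L) ∧ M a c b

/-- A graph has sufficiently many `e`-edges if `→e` is "well-founded" in the
sense that every nonempty set of vertices contains a vertex `a` with `b →e a`
for all `b` in the set. -/
def SuffEps {V : Type v} (E : V → C → V → Prop) (e : C) : Prop :=
  ∀ A : Set V, A.Nonempty → ∃ a ∈ A, ∀ b ∈ A, E b e a

end Prelim
/-- Colors for counter games: monotone maps `ℕ → ℕ`. -/
abbrev MF : Type := {f : ℕ → ℕ // Monotone f}

/-- `fwdIter w k = f_k(f_{k-1}(⋯(f₀(0))⋯))`. -/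
def fwdIter (w : ℕ → MF) : ℕ → ℕ
  | 0 => (w 0).val 0
  | k + 1 => (w (k + 1)).val (fwdIter w k)

/-- The boundedness objective `Bounded_N`: all forward counter values stay
at most `N`. -/
def BoundedW (N : ℕ) : Set (ℕ → MF) := {w | ∀ k : ℕ, fwdIter w k ≤ N}

/-- The monotonic `MF`-graph for boundedness games: vertices `{0, …, N}`
with the reverse order (`N` least, `0` greatest), edges `ℓ →f ℓ'` iff
`f(ℓ) ≤ ℓ'` (in the usual order on integers). -/
def boundedE (N : ℕ) : (Fin (N + 1))ᵒᵈ → MF → (Fin (N + 1))ᵒᵈ → Prop :=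
  fun l f l' =>
    f.val (OrderDual.ofDual l : Fin (N + 1)).val ≤ (OrderDual.ofDual l' : Fin (N + 1)).val

/-!
A vertex `ℓ` of `L` is an upper bound for the counter: along a path of `L` from `ℓ` the
counter started at `0` stays below the current vertex, hence below `N`. Conversely, in a
graph satisfying `Bounded_N`, send each vertex `v` to the largest initial counter value
`m ≤ N` from which every path from `v` keeps the counter at most `N` (`m = 0` qualifies by
assumption). If `m` is such a value at `v` and `v →f v'`, then `f(m)` is one at `v'`, so
`f(φ v) ≤ φ v'`, which is exactly an edge `φ v →f φ v'` of `L`.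
-/

section InfPath

variable {C : Type} {V : Type*} {E : V → C → V → Prop}

theorem NoSinks.exists_infPath (hE : NoSinks E) (v : V) : ∃ w, InfPath E v w := by
  choose c next hnext using hE
  refine ⟨fun i => c (next^[i] v), fun i => next^[i] v, rfl, fun i => ?_⟩
  dsimp only
  rw [Function.iterate_succ_apply']
  exact hnext _

theorem InfPath.cons {v v' : V} {c : C} {w : ℕ → C} (h : E v c v') (hw : InfPath E v' w) :
    InfPath E v (Stream'.cons c w) := by
  obtain ⟨ρ, hρ0, hρ⟩ := hw
  refine ⟨Stream'.cons v ρ, rfl, fun i => ?_⟩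
  cases i with
  | zero => simpa [Stream'.cons, hρ0] using h
  | succ i => exact hρ i

end InfPath

/-- Unlike `fwdIter w k`, `counterRun w m k` is the value after `k` steps, so `counterRun w m 0 = m`. -/
def counterRun (w : ℕ → MF) (m : ℕ) : ℕ → ℕ
  | 0 => m
  | k + 1 => (w k).val (counterRun w m k)

theorem fwdIter_eq_counterRun (w : ℕ → MF) : ∀ k, fwdIter w k = counterRun w 0 (k + 1)
  | 0 => rfl
  | k + 1 => by rw [fwdIter, fwdIter_eq_counterRun w k]; rfl

theorem counterRun_cons_succ (f : MF) (w : ℕ → MF) (m : ℕ) :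
    ∀ k, counterRun (Stream'.cons f w) m (k + 1) = counterRun w (f.val m) k
  | 0 => rfl
  | k + 1 => congrArg (w k).val (counterRun_cons_succ f w m k)

theorem mem_boundedW_iff {N : ℕ} {w : ℕ → MF} :
    w ∈ BoundedW N ↔ ∀ k, counterRun w 0 k ≤ N := by
  refine ⟨fun hw k => ?_, fun hw k => (fwdIter_eq_counterRun w k).le.trans (hw (k + 1))⟩
  cases k with
  | zero => exact Nat.zero_le N
  | succ k => exact (fwdIter_eq_counterRun w k).ge.trans (hw k)

section BoundednessGraph

variable (N : ℕ)

theorem monotonic_boundedE : Monotonic (boundedE N) :=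
  ⟨fun _ _ f _ hba hf => (f.2 hba).trans hf, fun _ _ _ _ hf hdb => hf.trans hdb⟩

theorem noSinks_boundedE : NoSinks (boundedE N) :=
  fun _ => ⟨⟨fun _ => 0, monotone_const⟩, OrderDual.toDual 0, Nat.zero_le _⟩

theorem counterRun_le_of_boundedE_path {w : ℕ → MF} {ρ : ℕ → (Fin (N + 1))ᵒᵈ}
    (hρ : ∀ i, boundedE N (ρ i) (w i) (ρ (i + 1))) {m : ℕ}
    (hm : m ≤ (OrderDual.ofDual (ρ 0)).val) :
    ∀ k, counterRun w m k ≤ (OrderDual.ofDual (ρ k)).val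
  | 0 => hm
  | k + 1 => ((w k).2 (counterRun_le_of_boundedE_path hρ hm k)).trans (hρ k)

theorem sat_boundedE (l : (Fin (N + 1))ᵒᵈ) : Sat (BoundedW N) (boundedE N) l := by
  rintro w ⟨ρ, -, hρ⟩
  exact mem_boundedW_iff.2 fun k =>
    (counterRun_le_of_boundedE_path N hρ (Nat.zero_le _) k).trans
      (Nat.lt_succ_iff.1 (OrderDual.ofDual (ρ k)).isLt)

end BoundednessGraph

section SafeCounter

variable {V : Type*} {E : V → MF → V → Prop} {N : ℕ}

variable (E N) in
def SafeCounter (v : V) (m : ℕ) : Prop :=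
  ∀ w, InfPath E v w → ∀ k, counterRun w m k ≤ N

theorem safeCounter_zero_iff {v : V} : SafeCounter E N v 0 ↔ Sat (BoundedW N) E v :=
  forall₂_congr fun _ _ => mem_boundedW_iff.symm

theorem SafeCounter.le (hE : NoSinks E) {v : V} {m : ℕ} (h : SafeCounter E N v m) : m ≤ N :=
  let ⟨w, hw⟩ := hE.exists_infPath v
  h w hw 0

theorem SafeCounter.of_edge {v v' : V} {f : MF} (hf : E v f v') {m : ℕ}
    (h : SafeCounter E N v m) : SafeCounter E N v' (f.val m) := fun w hw k => by
  rw [← counterRun_cons_succ]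
  exact h _ (hw.cons hf) (k + 1)

variable (E N) in
open Classical in
noncomputable def maxSafeCounter (v : V) : ℕ :=
  Nat.findGreatest (SafeCounter E N v) N

theorem maxSafeCounter_le (v : V) : maxSafeCounter E N v ≤ N := by
  classical
  exact Nat.findGreatest_le N

theorem map_maxSafeCounter_le_of_edge (hE : NoSinks E) {v v' : V} (hv : Sat (BoundedW N) E v)
    {f : MF} (hf : E v f v') : f.val (maxSafeCounter E N v) ≤ maxSafeCounter E N v' := by
  classical
  have hsafe : SafeCounter E N v (maxSafeCounter E N v) :=
    Nat.findGreatest_spec (Nat.zero_le N) (safeCounter_zero_iff.2 hv)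
  have hsafe' := hsafe.of_edge hf
  exact Nat.le_findGreatest (hsafe'.le hE) hsafe'

theorem exists_isMorphism_boundedE (hE : NoSinks E) (hsat : ∀ v, Sat (BoundedW N) E v) :
    ∃ φ : V → (Fin (N + 1))ᵒᵈ, IsMorphism E (boundedE N) φ :=
  ⟨fun v => OrderDual.toDual ⟨maxSafeCounter E N v, Nat.lt_succ_of_le (maxSafeCounter_le v)⟩,
    fun _ _ _ h => map_maxSafeCounter_le_of_edge hE (hsat _) h⟩

end SafeCounter

/-- Theorem 6.10.  The boundedness graph `L` is
well-monotonic, satisfies `Bounded_N`, and every graph (of arbitrary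
cardinality) satisfying `Bounded_N` admits a morphism into `L`. -/
theorem stmt16 (N : ℕ) :
    Monotonic (boundedE N) ∧ NoSinks (boundedE N) ∧
    WellFounded ((· < ·) : (Fin (N + 1))ᵒᵈ → (Fin (N + 1))ᵒᵈ → Prop) ∧
    (∀ l : (Fin (N + 1))ᵒᵈ, Sat (BoundedW N) (boundedE N) l) ∧
    (∀ (V : Type u) (E : V → MF → V → Prop), NoSinks E →
      (∀ v : V, Sat (BoundedW N) E v) →
      ∃ φ : V → (Fin (N + 1))ᵒᵈ, IsMorphism E (boundedE N) φ) :=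
  ⟨monotonic_boundedE N, noSinks_boundedE N, wellFounded_lt, sat_boundedE N,
    fun _ _ hE hsat => exists_isMorphism_boundedE hE hsat⟩
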